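/- If w is a square-free word over Σ (w contains no factor of the form vv with v nonempty) and u is a scattered factor of w with at least two distinct embeddings in w, then |C(w,u)| > 1. -/

import Mathlib

/-- An embedding of `u` in `w`: a strictly increasing map of positions of `u`
into positions of `w` such that corresponding letters agree. -/
def IsEmbedding {α : Type*} (w u : List α) (e : Fin u.length → Fin w.length) : Prop :=
  StrictMono e ∧ ∀ i : Fin u.length, u.get i = w.get (e i)

/-- `InShuffle u v w` means `w ∈ u ⧢ v`: `w` has length `|u| + |v|` and admits
embeddings of `u` and of `v` with disjoint images (hence the images partition
the positions of `w`). -/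
def InShuffle {α : Type*} (u v w : List α) : Prop :=
  w.length = u.length + v.length ∧
    ∃ (e₁ : Fin u.length → Fin w.length) (e₂ : Fin v.length → Fin w.length),
      IsEmbedding w u e₁ ∧ IsEmbedding w v e₂ ∧ ∀ i j, e₁ i ≠ e₂ j

/-- The complement scattered factor set `C(w,u)`:
all `v` (necessarily of length `|w| - |u|`) with `w ∈ u ⧢ v`. -/
def CompSet {α : Type*} (w u : List α) : Set (List α) := {v | InShuffle u v w}

/-! Let `i` be the first index at which two embeddings `e₁`, `e₂` of `u` differ, say
`e₁ i < e₂ i`. As `e₂` agrees with `e₁` below `i`, it uses no position in `[e₁ i, e₂ i)`, so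
the block of `w` from `e₁ i` to `e₂ i` reads `a c a` with `a = u[i]`, and `e₂` uses only its
last letter. Using the first `a` instead still embeds `u`, and replaces `a c` by `c a` in the
complement. The two complements agree only if `a c = c a`, which makes `a a` a factor of `w`. -/

section MarkedWords

variable {α : Type*}

def marked (z : List (α × Bool)) : List α := (z.filter (·.2)).map Prod.fst

def unmarked (z : List (α × Bool)) : List α := (z.filter (!·.2)).map Prod.fst

@[simp] theorem marked_nil : marked ([] : List (α × Bool)) = [] := rfl
@[simp] theorem unmarked_nil : unmarked ([] : List (α × Bool)) = [] := rfl

@[simp] theorem marked_cons_true (a : α) (z : List (α × Bool)) :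
    marked ((a, true) :: z) = a :: marked z := by simp [marked]
@[simp] theorem marked_cons_false (a : α) (z : List (α × Bool)) :
    marked ((a, false) :: z) = marked z := by simp [marked]
@[simp] theorem unmarked_cons_true (a : α) (z : List (α × Bool)) :
    unmarked ((a, true) :: z) = unmarked z := by simp [unmarked]
@[simp] theorem unmarked_cons_false (a : α) (z : List (α × Bool)) :
    unmarked ((a, false) :: z) = a :: unmarked z := by simp [unmarked]

@[simp] theorem marked_append (z₁ z₂ : List (α × Bool)) :
    marked (z₁ ++ z₂) = marked z₁ ++ marked z₂ := by simp [marked]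
@[simp] theorem unmarked_append (z₁ z₂ : List (α × Bool)) :
    unmarked (z₁ ++ z₂) = unmarked z₁ ++ unmarked z₂ := by simp [unmarked]

@[simp] theorem marked_map_false (l : List α) : marked (l.map (·, false)) = [] := by
  induction l <;> simp_all
@[simp] theorem unmarked_map_false (l : List α) : unmarked (l.map (·, false)) = l := by
  induction l <;> simp_all

end MarkedWords

section Shuffle

variable {α : Type*}

theorem inShuffle_nil : InShuffle ([] : List α) [] [] :=
  ⟨rfl, Fin.elim0, Fin.elim0, ⟨fun i => i.elim0, fun i => i.elim0⟩,
    ⟨fun i => i.elim0, fun i => i.elim0⟩, fun i => i.elim0⟩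

theorem InShuffle.symm {u v w : List α} (h : InShuffle u v w) : InShuffle v u w := by
  obtain ⟨hl, e₁, e₂, h₁, h₂, hd⟩ := h
  exact ⟨by omega, e₂, e₁, h₂, h₁, fun i j he => hd j i he.symm⟩

theorem InShuffle.cons_left {u v w : List α} (a : α) (h : InShuffle u v w) :
    InShuffle (a :: u) v (a :: w) := by
  obtain ⟨hl, e₁, e₂, h₁, h₂, hd⟩ := h
  refine ⟨by simp [hl]; omega, Fin.cons 0 (Fin.succ ∘ e₁), Fin.succ ∘ e₂,
    ⟨?_, ?_⟩, ⟨?_, ?_⟩, ?_⟩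
  · intro x y hxy
    induction x using Fin.cases <;> induction y using Fin.cases
    all_goals simp_all [h₁.1.lt_iff_lt]
  · intro i
    induction i using Fin.cases with
    | zero => rfl
    | succ j => simpa using h₁.2 j
  · exact fun x y hxy => Fin.succ_lt_succ_iff.2 (h₂.1 hxy)
  · intro j; simpa using h₂.2 j
  · intro i j
    induction i using Fin.cases with
    | zero => exact (Fin.succ_ne_zero _).symm
    | succ x => simpa using hd x j

theorem InShuffle.cons_right {u v w : List α} (a : α) (h : InShuffle u v w) :
    InShuffle u (a :: v) (a :: w) :=
  (h.symm.cons_left a).symm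

theorem inShuffle_marked_unmarked :
    ∀ z : List (α × Bool), InShuffle (marked z) (unmarked z) (z.map Prod.fst)
  | [] => inShuffle_nil
  | (a, true) :: z => by simpa using (inShuffle_marked_unmarked z).cons_left a
  | (a, false) :: z => by simpa using (inShuffle_marked_unmarked z).cons_right a

theorem unmarked_mem_compSet {w u : List α} {z : List (α × Bool)}
    (hw : z.map Prod.fst = w) (hu : marked z = u) : unmarked z ∈ CompSet w u :=
  hw ▸ hu ▸ inShuffle_marked_unmarked z

theorem IsEmbedding.sublist {w v : List α} {e : Fin v.length → Fin w.length}
    (h : IsEmbedding w v e) : v.Sublist w := by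
  rw [List.sublist_iff_exists_fin_orderEmbedding_get_eq]
  exact ⟨OrderEmbedding.ofStrictMono e h.1, h.2⟩

theorem compSet_finite (w u : List α) : (CompSet w u).Finite := by
  refine w.sublists.finite_toSet.subset ?_
  rintro v ⟨-, _, _, -, h₂, -⟩
  simpa using h₂.sublist

end Shuffle

section Blocks

variable {α : Type*}

theorem isChain_ne_of_squareFree {w : List α}
    (hsf : ¬ ∃ v : List α, v ≠ [] ∧ (v ++ v) <:+: w) : w.IsChain (· ≠ ·) :=
  List.isChain_iff_forall_rel_of_append_cons_cons.2 fun a b l₁ l₂ hw hab =>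
    hsf ⟨[a], List.cons_ne_nil _ _, l₁, l₂, by simp [hw, hab]⟩

theorem one_lt_ncard_compSet_of_eq_append {w u : List α} (hw : w.IsChain (· ≠ ·))
    {x y : List (α × Bool)} {a : α} {c : List α}
    (hzw : (x ++ (a, false) :: c.map (·, false) ++ (a, true) :: y).map Prod.fst = w)
    (hzu : marked (x ++ (a, false) :: c.map (·, false) ++ (a, true) :: y) = u) :
    1 < (CompSet w u).ncard := by
  set z' := x ++ (a, true) :: (c ++ [a]).map (·, false) ++ y
  have hz'w : z'.map Prod.fst = w := by rw [← hzw]; simp [z', Function.comp_def]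
  have hz'u : marked z' = u := by rw [← hzu]; simp [z']
  refine (Set.one_lt_ncard_iff (compSet_finite w u)).2
    ⟨_, _, unmarked_mem_compSet hzw hzu, unmarked_mem_compSet hz'w hz'u, fun h => ?_⟩
  have hc : a :: c = c ++ [a] :=
    List.append_cancel_right (by simpa [z'] using h : a :: c ++ unmarked y = _)
  have hblock : a :: c ++ [a] <:+: w :=
    ⟨x.map Prod.fst, y.map Prod.fst, by rw [← hzw]; simp [Function.comp_def]⟩
  rw [List.cons_append, ← hc] at hblock
  simpa using hw.infix hblock

theorem eq_append_of_marks {z : List (α × Bool)} {P Q : ℕ} (hPQ : P < Q) (hQ : Q < z.length)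
    (hmark : z[Q].2 = true) (hgap : ∀ k (hk : k < Q), P ≤ k → z[k].2 = false) :
    z = z.take P ++ (z[P].1, false) ::
      (((z.drop (P + 1)).take (Q - (P + 1))).map Prod.fst).map (·, false) ++
        (z[Q].1, true) :: z.drop (Q + 1) := by
  refine List.ext_getElem (by simp; omega) fun k _ _ => ?_
  grind

end Blocks

section EmbeddingMask

variable {α : Type*}

theorem List.filter_finRange_eq_map_of_strictMono {m n : ℕ} {e : Fin m → Fin n}
    (he : StrictMono e) :
    (List.finRange n).filter (fun k => decide (∃ j, e j = k)) = (List.finRange m).map e := by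
  refine List.Perm.eq_of_pairwise' (r := (· < ·)) ((List.pairwise_lt_finRange n).filter _)
    (List.pairwise_map.2 ((List.pairwise_lt_finRange m).imp fun h => he h)) ?_
  refine (List.perm_ext_iff_of_nodup ((List.nodup_finRange n).filter _)
    ((List.nodup_finRange m).map he.injective)).2 fun k => ?_
  simp [eq_comm]

def embeddingMask (w u : List α) (e : Fin u.length → Fin w.length) : List (α × Bool) :=
  List.ofFn fun k => (w.get k, decide (∃ j, e j = k))

theorem marked_embeddingMask {w u : List α} {e : Fin u.length → Fin w.length}
    (he : IsEmbedding w u e) : marked (embeddingMask w u e) = u := by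
  rw [marked, embeddingMask, List.ofFn_eq_map, List.filter_map, List.map_map]
  change ((List.finRange _).filter fun k => decide (∃ j, e j = k)).map (fun k => w.get k) = u
  rw [List.filter_finRange_eq_map_of_strictMono he.1, List.map_map]
  refine List.ext_getElem (by simp) fun k _ hk => ?_
  simpa using (he.2 ⟨k, hk⟩).symm

variable (w u : List α) (e : Fin u.length → Fin w.length)

@[simp] theorem length_embeddingMask : (embeddingMask w u e).length = w.length := by
  simp [embeddingMask]

@[simp] theorem getElem_embeddingMask (k : ℕ) (hk : k < (embeddingMask w u e).length) :
    (embeddingMask w u e)[k] =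
      (w[k]'(by simpa using hk), decide (∃ j, (e j : ℕ) = k)) := by
  simp [embeddingMask, Fin.ext_iff]

@[simp] theorem map_fst_embeddingMask : (embeddingMask w u e).map Prod.fst = w := by
  simp [embeddingMask, List.map_ofFn, Function.comp_def]

end EmbeddingMask

theorem one_lt_ncard_compSet_of_toLex_lt {α : Type*} {w u : List α} (hw : w.IsChain (· ≠ ·))
    {e₁ e₂ : Fin u.length → Fin w.length} (h₁ : IsEmbedding w u e₁) (h₂ : IsEmbedding w u e₂)
    (h : toLex e₁ < toLex e₂) : 1 < (CompSet w u).ncard := by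
  obtain ⟨i, hprev, hlt⟩ : ∃ i, (∀ j < i, e₁ j = e₂ j) ∧ e₁ i < e₂ i := h
  set z := embeddingMask w u e₂
  have hQ : (e₂ i : ℕ) < z.length := by simp [z]
  have hP : (e₁ i : ℕ) < z.length := by simp [z]
  -- below `i` the embedding `e₂` agrees with `e₁`, so it skips the positions in `[e₁ i, e₂ i)`
  have hgap : ∀ k (hk : k < (e₂ i : ℕ)), (e₁ i : ℕ) ≤ k → z[k].2 = false := by
    intro k hk hik
    simp only [z, getElem_embeddingMask, decide_eq_false_iff_not, not_exists]
    intro j hj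
    rcases lt_or_ge j i with hji | hij
    · have := h₁.1 hji
      rw [hprev j hji, Fin.lt_def] at this
      omega
    · have := h₂.1.monotone hij
      rw [Fin.le_def] at this
      omega
  have hmark : z[(e₂ i : ℕ)].2 = true := by simp [z]
  have hletter : z[(e₁ i : ℕ)].1 = z[(e₂ i : ℕ)].1 := by
    simpa [z] using (h₁.2 i).symm.trans (h₂.2 i)
  have hz := eq_append_of_marks hlt hQ hmark hgap
  rw [hletter] at hz
  have hzw : z.map Prod.fst = w := map_fst_embeddingMask w u e₂
  have hzu : marked z = u := marked_embeddingMask h₂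
  rw [hz] at hzw hzu
  exact one_lt_ncard_compSet_of_eq_append hw hzw hzu

theorem stmt14_general {α : Type*} (w : List α)
    (hsf : ¬ ∃ v : List α, v ≠ [] ∧ (v ++ v) <:+: w)
    (u : List α)
    (e₁ e₂ : Fin u.length → Fin w.length)
    (h₁ : IsEmbedding w u e₁) (h₂ : IsEmbedding w u e₂) (hne : e₁ ≠ e₂) :
    1 < (CompSet w u).ncard := by
  have hw := isChain_ne_of_squareFree hsf
  rcases lt_or_gt_of_ne (toLex.injective.ne hne) with h | h
  · exact one_lt_ncard_compSet_of_toLex_lt hw h₁ h₂ h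
  · exact one_lt_ncard_compSet_of_toLex_lt hw h₂ h₁ h

/-- If `w` is square-free and the scattered factor `u` of `w` has at least two
distinct embeddings in `w`, then `|C(w,u)| > 1`. -/
theorem stmt14 {α : Type*} (w : List α)
    (hsf : ¬ ∃ v : List α, v ≠ [] ∧ (v ++ v) <:+: w)
    (u : List α) (hu : u.Sublist w)
    (e₁ e₂ : Fin u.length → Fin w.length)
    (h₁ : IsEmbedding w u e₁) (h₂ : IsEmbedding w u e₂) (hne : e₁ ≠ e₂) :
    1 < (CompSet w u).ncard :=
  stmt14_general w hsf u e₁ e₂ h₁ h₂ hne
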